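/- For all 0 < μ₁ < μ₂, the series Σ_{n=3}^{∞} (((1−s)(1 − (1−α)ⁿ) + p₀/2)/n!) · (Σ_{m=0}^{n−3} μ₁^{m+1} μ₂^{n−2−m}) converges, and ĉ(μ₁,μ₂) = p₀/2 + (1−s)α − Σ_{n=3}^{∞} (((1−s)(1 − (1−α)ⁿ) + p₀/2)/n!) · (Σ_{m=0}^{n−3} μ₁^{m+1} μ₂^{n−2−m}). In particular, since each coefficient ((1−s)(1 − (1−α)ⁿ) + p₀/2)/n! is positive, ĉ(μ₁,μ₂) is monotonically decreasing in both μ₁ and μ₂. -/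
import Mathlib


/-- Estimate `ĉ(μ₁,μ₂)` of the rate that the single photon pulse is detected
without phase error. -/
noncomputable def cHat (α s p₀ μ₁ μ₂ : ℝ) : ℝ :=
  (μ₂ ^ 2 * Real.exp μ₁ * ((1 - s) * (1 - Real.exp (-α * μ₁)) + (p₀ / 2) * (1 - Real.exp (-μ₁)))
    - μ₁ ^ 2 * Real.exp μ₂ * ((1 - s) * (1 - Real.exp (-α * μ₂)) + (p₀ / 2) * (1 - Real.exp (-μ₂))))
  / (μ₁ * μ₂ * (μ₂ - μ₁))

/-- The `n = k + 3` term of the series expansion of `ĉ(μ₁,μ₂)`: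
`(((1−s)(1 − (1−α)ⁿ) + p₀/2)/n!) · Σ_{m=0}^{n−3} μ₁^{m+1} μ₂^{n−2−m}` for `n = k + 3`. -/
noncomputable def cSeriesTerm (α s p₀ μ₁ μ₂ : ℝ) (k : ℕ) : ℝ :=
  (((1 - s) * (1 - (1 - α) ^ (k + 3)) + p₀ / 2) / (Nat.factorial (k + 3) : ℝ)) *
    ∑ m ∈ Finset.range (k + 1), μ₁ ^ (m + 1) * μ₂ ^ (k + 1 - m)

/-- Auxiliary coefficient function: the `n`-th term of the power series expansion of the
numerator of `ĉ(μ₁,μ₂)` (up to the constant correction at `n = 0`). -/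
noncomputable def stmt19bF (α s p₀ μ₁ μ₂ : ℝ) (n : ℕ) : ℝ :=
  ((1 - s) + p₀ / 2) * μ₂ ^ 2 * (μ₁ ^ n / n.factorial)
    - (1 - s) * μ₂ ^ 2 * (((1 - α) * μ₁) ^ n / n.factorial)
    - ((1 - s) + p₀ / 2) * μ₁ ^ 2 * (μ₂ ^ n / n.factorial)
    + (1 - s) * μ₁ ^ 2 * (((1 - α) * μ₂) ^ n / n.factorial)

lemma stmt19_exp_hasSum (x : ℝ) : HasSum (fun n : ℕ => x ^ n / n.factorial) (Real.exp x) := by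
  have h := (Real.summable_pow_div_factorial x).hasSum
  rwa [show ∑' n : ℕ, x ^ n / n.factorial = Real.exp x by
    rw [Real.exp_eq_exp_ℝ, NormedSpace.exp_eq_tsum_div]] at h

lemma stmt19bF_hasSum (α s p₀ μ₁ μ₂ : ℝ) :
    HasSum (stmt19bF α s p₀ μ₁ μ₂)
      (((1 - s) + p₀ / 2) * μ₂ ^ 2 * Real.exp μ₁
        - (1 - s) * μ₂ ^ 2 * Real.exp ((1 - α) * μ₁)
        - ((1 - s) + p₀ / 2) * μ₁ ^ 2 * Real.exp μ₂
        + (1 - s) * μ₁ ^ 2 * Real.exp ((1 - α) * μ₂)) :=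
  ((((stmt19_exp_hasSum μ₁).mul_left _).sub ((stmt19_exp_hasSum _).mul_left _)).sub
    ((stmt19_exp_hasSum μ₂).mul_left _)).add ((stmt19_exp_hasSum _).mul_left _)

lemma stmt19bF_eq (α s p₀ μ₁ μ₂ : ℝ) (n : ℕ) :
    stmt19bF α s p₀ μ₁ μ₂ n =
      (((1 - s) * (1 - (1 - α) ^ n) + p₀ / 2) / (n.factorial : ℝ)) *
        (μ₂ ^ 2 * μ₁ ^ n - μ₁ ^ 2 * μ₂ ^ n) := by
  have hfac : (n.factorial : ℝ) ≠ 0 := Nat.cast_ne_zero.mpr n.factorial_ne_zero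
  unfold stmt19bF
  rw [mul_pow, mul_pow]
  field_simp
  ring

lemma stmt19_geom_aux (μ₁ μ₂ : ℝ) (k : ℕ) :
    μ₂ ^ 2 * μ₁ ^ (k + 3) - μ₁ ^ 2 * μ₂ ^ (k + 3) =
      -(μ₁ * μ₂ * (μ₂ - μ₁)) * ∑ m ∈ Finset.range (k + 1), μ₁ ^ (m + 1) * μ₂ ^ (k + 1 - m) := by
  have h1 : ∑ m ∈ Finset.range (k + 1), μ₁ ^ (m + 1) * μ₂ ^ (k + 1 - m)
      = μ₁ * μ₂ * ∑ m ∈ Finset.range (k + 1), μ₁ ^ m * μ₂ ^ (k - m) := by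
    rw [Finset.mul_sum]
    refine Finset.sum_congr rfl fun m hm => ?_
    have hm' : m ≤ k := Nat.lt_succ_iff.mp (Finset.mem_range.mp hm)
    have h2 : k + 1 - m = (k - m) + 1 := by omega
    rw [h2, pow_succ]
    ring
  have h2 := geom_sum₂_mul μ₁ μ₂ (k + 1)
  simp only [Nat.add_sub_cancel] at h2
  rw [h1]
  linear_combination (-(μ₁ ^ 2 * μ₂ ^ 2)) * h2

lemma stmt19_cSeriesTerm_eq (α s p₀ μ₁ μ₂ : ℝ) (k : ℕ) :
    (μ₁ * μ₂ * (μ₂ - μ₁)) * cSeriesTerm α s p₀ μ₁ μ₂ k = - stmt19bF α s p₀ μ₁ μ₂ (k + 3) := by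
  rw [stmt19bF_eq, stmt19_geom_aux]
  unfold cSeriesTerm
  ring

lemma stmt19_key (α s p₀ μ₁ μ₂ : ℝ) (h1 : 0 < μ₁) (h12 : μ₁ < μ₂) :
    Summable (cSeriesTerm α s p₀ μ₁ μ₂) ∧
    cHat α s p₀ μ₁ μ₂ = p₀ / 2 + (1 - s) * α - ∑' k, cSeriesTerm α s p₀ μ₁ μ₂ k := by
  have h2 : 0 < μ₂ := h1.trans h12
  have hsub : 0 < μ₂ - μ₁ := sub_pos.mpr h12
  have hD : (0:ℝ) < μ₁ * μ₂ * (μ₂ - μ₁) := by positivity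
  have hb := stmt19bF_hasSum α s p₀ μ₁ μ₂
  have hbs : Summable (stmt19bF α s p₀ μ₁ μ₂) := hb.summable
  have hshift : Summable (fun k => stmt19bF α s p₀ μ₁ μ₂ (k + 3)) :=
    (summable_nat_add_iff 3).2 hbs
  have hterm : ∀ k, cSeriesTerm α s p₀ μ₁ μ₂ k
      = (1 / (μ₁ * μ₂ * (μ₂ - μ₁))) * (- stmt19bF α s p₀ μ₁ μ₂ (k + 3)) := by
    intro k
    rw [← stmt19_cSeriesTerm_eq]
    field_simp
  have hsummable : Summable (cSeriesTerm α s p₀ μ₁ μ₂) :=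
    ((hshift.neg.mul_left _).congr fun k => (hterm k).symm)
  refine ⟨hsummable, ?_⟩
  have hTD : (μ₁ * μ₂ * (μ₂ - μ₁)) * ∑' k, cSeriesTerm α s p₀ μ₁ μ₂ k
      = - ∑' k, stmt19bF α s p₀ μ₁ μ₂ (k + 3) := by
    rw [← tsum_mul_left, ← tsum_neg]
    exact tsum_congr fun k => stmt19_cSeriesTerm_eq α s p₀ μ₁ μ₂ k
  have hsplit := Summable.sum_add_tsum_nat_add 3 hbs
  rw [hb.tsum_eq] at hsplit
  have hrange : ∑ i ∈ Finset.range 3, stmt19bF α s p₀ μ₁ μ₂ i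
      = p₀ / 2 * (μ₂ ^ 2 - μ₁ ^ 2) + ((1 - s) * α + p₀ / 2) * (μ₁ * μ₂ * (μ₂ - μ₁)) := by
    norm_num [Finset.sum_range_succ, stmt19bF, Nat.factorial]
    ring
  rw [hrange] at hsplit
  have hexp1 : Real.exp ((1 - α) * μ₁) = Real.exp μ₁ * Real.exp (-α * μ₁) := by
    rw [← Real.exp_add]; congr 1; ring
  have hexp2 : Real.exp ((1 - α) * μ₂) = Real.exp μ₂ * Real.exp (-α * μ₂) := by
    rw [← Real.exp_add]; congr 1; ring
  have hexp3 : Real.exp μ₁ * Real.exp (-μ₁) = 1 := by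
    rw [← Real.exp_add]; simp
  have hexp4 : Real.exp μ₂ * Real.exp (-μ₂) = 1 := by
    rw [← Real.exp_add]; simp
  unfold cHat
  rw [div_eq_iff hD.ne']
  rw [hexp1, hexp2] at hsplit
  linear_combination hTD - hsplit - (p₀ / 2 * μ₂ ^ 2) * hexp3 + (p₀ / 2 * μ₁ ^ 2) * hexp4

lemma stmt19_term_mono (α s p₀ : ℝ) (hα : 0 < α) (hα1 : α ≤ 1) (hs : s < 1 / 2)
    (hp : 0 < p₀) (μ₁ μ₂ ν₁ ν₂ : ℝ) (h1 : 0 < μ₁) (h2 : 0 < μ₂)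
    (hμν1 : μ₁ ≤ ν₁) (hμν2 : μ₂ ≤ ν₂) (k : ℕ) :
    cSeriesTerm α s p₀ μ₁ μ₂ k ≤ cSeriesTerm α s p₀ ν₁ ν₂ k := by
  unfold cSeriesTerm
  have hc : (0:ℝ) ≤ ((1 - s) * (1 - (1 - α) ^ (k + 3)) + p₀ / 2) / (Nat.factorial (k + 3) : ℝ) := by
    apply div_nonneg _ (by positivity)
    have hp1 : (1 - α) ^ (k + 3) ≤ 1 := pow_le_one₀ (by linarith) (by linarith)
    nlinarith
  apply mul_le_mul_of_nonneg_left _ hc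
  refine Finset.sum_le_sum fun m _ => ?_
  exact mul_le_mul (pow_le_pow_left₀ h1.le hμν1 _) (pow_le_pow_left₀ h2.le hμν2 _)
    (by positivity) (pow_nonneg (h1.le.trans hμν1) _)

theorem stmt19 (α s p₀ : ℝ)
    (hα : 0 < α) (hα1 : α ≤ 1) (hs0 : 0 ≤ s) (hs : s < 1 / 2) (hp : 0 < p₀) :
    (∀ μ₁ μ₂ : ℝ, 0 < μ₁ → μ₁ < μ₂ →
      Summable (cSeriesTerm α s p₀ μ₁ μ₂) ∧
      cHat α s p₀ μ₁ μ₂ = p₀ / 2 + (1 - s) * α - ∑' k, cSeriesTerm α s p₀ μ₁ μ₂ k) ∧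
    (∀ μ₁ μ₂ ν₁ ν₂ : ℝ, 0 < μ₁ → μ₁ < μ₂ → 0 < ν₁ → ν₁ < ν₂ → μ₁ ≤ ν₁ → μ₂ ≤ ν₂ →
      cHat α s p₀ ν₁ ν₂ ≤ cHat α s p₀ μ₁ μ₂) := by
  refine ⟨fun μ₁ μ₂ h1 h12 => stmt19_key α s p₀ μ₁ μ₂ h1 h12, ?_⟩
  intro μ₁ μ₂ ν₁ ν₂ h1 h12 hn1 hn12 hm1 hm2
  obtain ⟨hsμ, heμ⟩ := stmt19_key α s p₀ μ₁ μ₂ h1 h12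
  obtain ⟨hsν, heν⟩ := stmt19_key α s p₀ ν₁ ν₂ hn1 hn12
  rw [heμ, heν]
  have := Summable.tsum_le_tsum
    (stmt19_term_mono α s p₀ hα hα1 hs hp μ₁ μ₂ ν₁ ν₂ h1 (h1.trans h12) hm1 hm2) hsμ hsν
  linarith
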